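/- arXiv:1503.02119 — 3 statements merged into one kernel-verified Lean document; each statement's English description precedes it below -/
import Mathlib

section
/- Theorem 5 (uniqueness criterion with finite exhausting sets, via criterion (C3)): Let q be a totally stable, conservative Q-matrix on a countable set E. Then for every λ > 0 the only λ-solution is u = 0 (equivalently, the Q-process is unique) if and only if the following two conditions hold simultaneously: (U1)′ there exist FINITE subsets E_n ⊆ E with E_n ⊆ E_{n+1} and ⋃_n E_n = E, together with a nonnegative function φ : E → [0,∞) such that lim_{n→∞} inf_{i ∉ E_n} φ(i) = ∞ (with the convention inf_∅ = ∞); and (U2) there exists a constant c ∈ ℝ such that Qφ ≤ cφ. -/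
/-!
Sufficiency: if `u` is a `λ`-solution, convexity of `t ↦ t ^ k` makes `u ^ k` a subsolution
at level `kλ`. Taking `kλ ≥ c`, the function `u ^ k - εφ` attains its maximum because `φ → ∞`
off finite sets, and at a maximum point the drift condition gives `u ^ k ≤ εφ`. Letting `ε → 0`
yields `u = 0`.

Necessity: enumerate `E` by finite sets `F n ↑ E` and iterate, starting from `1`,
`x ↦ (∑_{j ≠ i} q(i,j) x(j)) / (1 + q_i)` on `F n` and `x ↦ 1` off `F n`. The iterates
decrease to a `1`-solution, hence to `0`, and each is a supersolution equal to `1` off `F n`.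
The sum `φ` of a fast-decaying subsequence is finite, satisfies `Qφ ≤ φ`, and is at least
`n + 1` off the `n`-th chosen set.
-/

open scoped BigOperators Classical

/-- `q` is a totally stable, conservative Q-matrix on `E`:
off-diagonal entries are nonnegative, the jump rates `q_i = -q i i` are
nonnegative (and finite), and the off-diagonal row sums equal `q_i`. -/
def IsQMatrix {E : Type*} (q : E → E → ℝ) : Prop :=
  (∀ i j, i ≠ j → 0 ≤ q i j) ∧ (∀ i, q i i ≤ 0) ∧
    ∀ i, HasSum (fun j => if j = i then 0 else q i j) (-q i i)

/-- `u` is a `λ`-solution of `(λ I - Q) u = 0`, `0 ≤ u ≤ 1`: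
`∑_{j ≠ i} q(i,j) u(j) = (λ + q_i) u(i)` for every `i`. -/
def IsLamSolution {E : Type*} (q : E → E → ℝ) (lam : ℝ) (u : E → ℝ) : Prop :=
  (∀ i, 0 ≤ u i ∧ u i ≤ 1) ∧
    ∀ i, HasSum (fun j => if j = i then 0 else q i j * u j) ((lam + -q i i) * u i)

/-- The drift condition `Qφ ≤ cφ`: for every `i`, the series
`∑_{j ≠ i} q(i,j) φ(j)` is finite and
`∑_{j ≠ i} q(i,j) φ(j) - q_i φ(i) ≤ c φ(i)`. -/
def DriftLE {E : Type*} (q : E → E → ℝ) (φ : E → ℝ) (c : ℝ) : Prop :=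
  ∀ i, Summable (fun j => if j = i then 0 else q i j * φ j) ∧
    (∑' j, if j = i then 0 else q i j * φ j) - (-q i i) * φ i ≤ c * φ i

/-- The drift condition `Qφ ≥ cφ`: for every `i`, the series
`∑_{j ≠ i} q(i,j) φ(j)` converges and
`∑_{j ≠ i} q(i,j) φ(j) - q_i φ(i) ≥ c φ(i)`. -/
def DriftGE {E : Type*} (q : E → E → ℝ) (φ : E → ℝ) (c : ℝ) : Prop :=
  ∀ i, Summable (fun j => if j = i then 0 else q i j * φ j) ∧
    c * φ i ≤ (∑' j, if j = i then 0 else q i j * φ j) - (-q i i) * φ i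

open Filter Topology Set

section

variable {E : Type*} {q : E → E → ℝ}

/-- The off-diagonal part `∑_{j ≠ i} q(i,j) x(j)` of `(Qx)(i)`. -/
noncomputable def jumpSum (q : E → E → ℝ) (x : E → ℝ) (i : E) : ℝ :=
  ∑' j, if j = i then 0 else q i j * x j

namespace IsQMatrix

lemma rate_nonneg (hq : IsQMatrix q) (i : E) : 0 ≤ -q i i := neg_nonneg.2 (hq.2.1 i)

lemma jump_term_nonneg (hq : IsQMatrix q) {x : E → ℝ} (hx : ∀ j, 0 ≤ x j) (i j : E) :
    0 ≤ if j = i then 0 else q i j * x j := by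
  split_ifs with h
  · exact le_rfl
  · exact mul_nonneg (hq.1 i j (Ne.symm h)) (hx j)

lemma jump_term_mono (hq : IsQMatrix q) {x y : E → ℝ} (hxy : ∀ j, x j ≤ y j) (i j : E) :
    (if j = i then 0 else q i j * x j) ≤ if j = i then 0 else q i j * y j := by
  split_ifs with h
  · exact le_rfl
  · exact mul_le_mul_of_nonneg_left (hxy j) (hq.1 i j (Ne.symm h))

lemma summable_jump (hq : IsQMatrix q) {x : E → ℝ} (hx : ∀ j, x j ∈ Icc (0 : ℝ) 1) (i : E) :
    Summable fun j => if j = i then 0 else q i j * x j :=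
  (hq.2.2 i).summable.of_nonneg_of_le (hq.jump_term_nonneg (fun j => (hx j).1) i) fun j => by
    simpa using hq.jump_term_mono (fun j => (hx j).2) i j

lemma jumpSum_mono (hq : IsQMatrix q) {x y : E → ℝ} {i : E}
    (hx : Summable fun j => if j = i then 0 else q i j * x j)
    (hy : Summable fun j => if j = i then 0 else q i j * y j) (hxy : ∀ j, x j ≤ y j) :
    jumpSum q x i ≤ jumpSum q y i :=
  hx.tsum_le_tsum (hq.jump_term_mono hxy i) hy

lemma jumpSum_le_rate (hq : IsQMatrix q) {x : E → ℝ} (hx : ∀ j, x j ∈ Icc (0 : ℝ) 1) (i : E) :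
    jumpSum q x i ≤ -q i i := by
  have h1 : jumpSum q 1 i = -q i i := by simpa [jumpSum] using (hq.2.2 i).tsum_eq
  exact h1 ▸ hq.jumpSum_mono (hq.summable_jump hx i)
    (hq.summable_jump (fun _ => ⟨zero_le_one, le_rfl⟩) i) fun j => (hx j).2

lemma hasSum_jump_const_add (hq : IsQMatrix q) {φ : E → ℝ} {i : E}
    (hφ : Summable fun j => if j = i then 0 else q i j * φ j) (a b : ℝ) :
    HasSum (fun j => if j = i then 0 else q i j * (a + b * φ j))
      (a * -q i i + b * jumpSum q φ i) := by
  refine (((hq.2.2 i).mul_left a).add (hφ.hasSum.mul_left b)).congr_fun fun j => ?_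
  split_ifs <;> ring

lemma tendsto_jumpSum (hq : IsQMatrix q) {x : ℕ → E → ℝ} {y : E → ℝ}
    (hx : ∀ n j, x n j ∈ Icc (0 : ℝ) 1) (hxy : ∀ j, Tendsto (x · j) atTop (𝓝 (y j))) (i : E) :
    Tendsto (fun n => jumpSum q (x n) i) atTop (𝓝 (jumpSum q y i)) := by
  refine tendsto_tsum_of_dominated_convergence (hq.2.2 i).summable (fun j => ?_)
    (Eventually.of_forall fun n j => ?_)
  · split_ifs
    · exact tendsto_const_nhds
    · exact (hxy j).const_mul _
  · rw [Real.norm_of_nonneg (hq.jump_term_nonneg (fun j => (hx n j).1) i j)]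
    simpa using hq.jump_term_mono (fun j => (hx n j).2) i j

end IsQMatrix

lemma pow_succ_add_mul_sub_le {x y : ℝ} (hx : 0 ≤ x) (hy : 0 ≤ y) (m : ℕ) :
    y ^ (m + 1) + (m + 1) * y ^ m * (x - y) ≤ x ^ (m + 1) := by
  induction m with
  | zero => simp
  | succ m ih =>
    rw [pow_succ x (m + 1), pow_succ y (m + 1), pow_succ y m] at *
    push_cast
    nlinarith [mul_le_mul_of_nonneg_right ih hx,
      mul_nonneg (mul_nonneg (m.cast_add_one_pos (α := ℝ)).le (pow_nonneg hy m)) (sq_nonneg (x - y))]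

/-- The tangent-line bound for the convex map `t ↦ t ^ (m + 1)` turns a `λ`-solution into
a subsolution at level `(m + 1) λ`. -/
lemma IsLamSolution.pow_subsolution (hq : IsQMatrix q) {lam : ℝ} {u : E → ℝ}
    (hu : IsLamSolution q lam u) (m : ℕ) (i : E) :
    ((m + 1) * lam + -q i i) * u i ^ (m + 1) ≤ jumpSum q (fun j => u j ^ (m + 1)) i := by
  set a := u i
  have hjump : jumpSum q u i = (lam + -q i i) * a := (hu.2 i).tsum_eq
  have htangent := hq.hasSum_jump_const_add (hu.2 i).summable
    (a ^ (m + 1) - (m + 1) * a ^ m * a) ((m + 1) * a ^ m)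
  calc ((m + 1) * lam + -q i i) * a ^ (m + 1)
      = (a ^ (m + 1) - (m + 1) * a ^ m * a) * -q i i + (m + 1) * a ^ m * jumpSum q u i := by
        rw [hjump, pow_succ]; ring
    _ = ∑' j, if j = i then 0 else
          q i j * (a ^ (m + 1) - (m + 1) * a ^ m * a + (m + 1) * a ^ m * u j) :=
        htangent.tsum_eq.symm
    _ ≤ jumpSum q (fun j => u j ^ (m + 1)) i := by
        refine htangent.summable.tsum_le_tsum (hq.jump_term_mono (fun j => ?_) i) ?_
        · linarith [pow_succ_add_mul_sub_le (hu.1 j).1 (hu.1 i).1 m]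
        · exact hq.summable_jump (fun j => ⟨pow_nonneg (hu.1 j).1 _,
            pow_le_one₀ (hu.1 j).1 (hu.1 j).2⟩) i

/-- Maximum principle: `v - ε φ` attains its maximum since `φ → ∞` at infinity, and at a
maximum point the drift condition forces `v ≤ ε φ`. -/
lemma IsQMatrix.le_mul_of_subsolution (hq : IsQMatrix q) {μ c ε : ℝ} {v φ : E → ℝ}
    (hv : ∀ j, v j ∈ Icc (0 : ℝ) 1) (hsub : ∀ i, (μ + -q i i) * v i ≤ jumpSum q v i)
    (hφ0 : ∀ i, 0 ≤ φ i) (hφ : Tendsto φ cofinite atTop) (hdrift : DriftLE q φ c)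
    (hμ : 0 < μ) (hcμ : c ≤ μ) (hε : 0 < ε) (j : E) : v j ≤ ε * φ j := by
  have : Nonempty E := ⟨j⟩
  set w := fun i => v i - ε * φ i
  have hw : Tendsto w cofinite atBot :=
    tendsto_atBot_mono (fun i => by linarith [(hv i).2] : ∀ i, w i ≤ 1 + -(ε * φ i))
      (tendsto_atBot_add_const_left _ 1 (tendsto_neg_atTop_atBot.comp (hφ.const_mul_atTop hε)))
  obtain ⟨i₀, hmax⟩ := hw.exists_forall_ge
  have hsplit := hq.hasSum_jump_const_add (hdrift i₀).1 (w i₀) ε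
  have hupper : jumpSum q v i₀ ≤ w i₀ * -q i₀ i₀ + ε * jumpSum q φ i₀ :=
    hsplit.tsum_eq ▸ hq.jumpSum_mono (hq.summable_jump hv i₀) hsplit.summable
      fun j => by linarith [hmax j]
  have hdrift₀ : jumpSum q φ i₀ - -q i₀ i₀ * φ i₀ ≤ c * φ i₀ := (hdrift i₀).2
  have hmax₀ : μ * v i₀ ≤ μ * (ε * φ i₀) := by
    nlinarith [hsub i₀, mul_le_mul_of_nonneg_left hdrift₀ hε.le,
      mul_le_mul_of_nonneg_right hcμ (mul_nonneg hε.le (hφ0 i₀))]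
  linarith [hmax j, le_of_mul_le_mul_left hmax₀ hμ]

theorem IsLamSolution.eq_zero_of_drift (hq : IsQMatrix q) {lam c : ℝ} (hlam : 0 < lam)
    {u φ : E → ℝ} (hu : IsLamSolution q lam u) (hφ0 : ∀ i, 0 ≤ φ i)
    (hφ : Tendsto φ cofinite atTop) (hdrift : DriftLE q φ c) : u = 0 := by
  obtain ⟨m, hm⟩ : ∃ m : ℕ, c ≤ (m + 1) * lam := by
    obtain ⟨m, hm⟩ := exists_nat_ge (c / lam)
    exact ⟨m, by rw [div_le_iff₀ hlam] at hm; nlinarith⟩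
  have hv : ∀ j, u j ^ (m + 1) ∈ Icc (0 : ℝ) 1 := fun j =>
    ⟨pow_nonneg (hu.1 j).1 _, pow_le_one₀ (hu.1 j).1 (hu.1 j).2⟩
  have hsmall : ∀ j, ∀ ε > 0, u j ^ (m + 1) ≤ ε * φ j := fun j ε hε =>
    hq.le_mul_of_subsolution hv (hu.pow_subsolution hq m) hφ0 hφ hdrift (by positivity) hm hε j
  funext j
  have hlim : Tendsto (fun ε => ε * φ j) (𝓝[>] 0) (𝓝 0) := by
    simpa using ((tendsto_id (x := 𝓝 (0 : ℝ))).mul_const (φ j)).mono_left nhdsWithin_le_nhds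
  have hle : u j ^ (m + 1) ≤ 0 :=
    ge_of_tendsto hlim (eventually_nhdsWithin_of_forall fun ε hε => hsmall j ε hε)
  exact pow_eq_zero_iff m.succ_ne_zero |>.1 (le_antisymm hle (hv j).1)

noncomputable def exitStep (q : E → E → ℝ) (F : Set E) (x : E → ℝ) : E → ℝ :=
  fun i => if i ∈ F then jumpSum q x i / (1 + -q i i) else 1

noncomputable def exitSeq (q : E → E → ℝ) (F : ℕ → Set E) : ℕ → E → ℝ
  | 0 => 1
  | n + 1 => exitStep q (F n) (exitSeq q F n)

lemma exitSeq_succ_of_notMem {F : ℕ → Set E} {n : ℕ} {i : E} (hi : i ∉ F n) :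
    exitSeq q F (n + 1) i = 1 := by
  simp [exitSeq, exitStep, hi]

namespace IsQMatrix

lemma exitStep_mem_Icc (hq : IsQMatrix q) (F : Set E) {x : E → ℝ}
    (hx : ∀ j, x j ∈ Icc (0 : ℝ) 1) (i : E) : exitStep q F x i ∈ Icc (0 : ℝ) 1 := by
  have hden : 0 < 1 + -q i i := by linarith [hq.rate_nonneg i]
  unfold exitStep
  split_ifs
  · refine ⟨div_nonneg (tsum_nonneg (hq.jump_term_nonneg (fun j => (hx j).1) i)) hden.le, ?_⟩
    rw [div_le_one hden]
    linarith [hq.jumpSum_le_rate hx i]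
  · exact ⟨zero_le_one, le_rfl⟩

lemma exitStep_mono (hq : IsQMatrix q) {F G : Set E} (hFG : F ⊆ G) {x y : E → ℝ}
    (hx : ∀ j, x j ∈ Icc (0 : ℝ) 1) (hy : ∀ j, y j ∈ Icc (0 : ℝ) 1) (hxy : ∀ j, x j ≤ y j)
    (i : E) : exitStep q G x i ≤ exitStep q F y i := by
  by_cases hi : i ∈ F
  · simp only [exitStep, hi, hFG hi, if_true]
    exact div_le_div_of_nonneg_right
      (hq.jumpSum_mono (hq.summable_jump hx i) (hq.summable_jump hy i) hxy)
      (by linarith [hq.rate_nonneg i])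
  · simpa [exitStep, hi] using (hq.exitStep_mem_Icc G hx i).2

lemma exitSeq_mem_Icc (hq : IsQMatrix q) (F : ℕ → Set E) (n : ℕ) (i : E) :
    exitSeq q F n i ∈ Icc (0 : ℝ) 1 := by
  induction n generalizing i with
  | zero => exact ⟨zero_le_one, le_rfl⟩
  | succ n ih => exact hq.exitStep_mem_Icc (F n) ih i

lemma exitSeq_succ_le (hq : IsQMatrix q) {F : ℕ → Set E} (hF : Monotone F) (n : ℕ) (i : E) :
    exitSeq q F (n + 1) i ≤ exitSeq q F n i := by
  induction n generalizing i with
  | zero => exact (hq.exitSeq_mem_Icc F 1 i).2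
  | succ n ih =>
    exact hq.exitStep_mono (hF n.le_succ) (hq.exitSeq_mem_Icc F _) (hq.exitSeq_mem_Icc F _) ih i

lemma jumpSum_exitSeq_le (hq : IsQMatrix q) {F : ℕ → Set E} (hF : Monotone F) (n : ℕ)
    (i : E) : jumpSum q (exitSeq q F (n + 1)) i ≤ (1 + -q i i) * exitSeq q F (n + 1) i := by
  by_cases hi : i ∈ F n
  · have hden : 1 + -q i i ≠ 0 := by linarith [hq.rate_nonneg i]
    calc jumpSum q (exitSeq q F (n + 1)) i ≤ jumpSum q (exitSeq q F n) i :=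
          hq.jumpSum_mono (hq.summable_jump (hq.exitSeq_mem_Icc F _) i)
            (hq.summable_jump (hq.exitSeq_mem_Icc F _) i) (hq.exitSeq_succ_le hF n)
      _ = (1 + -q i i) * exitSeq q F (n + 1) i := by
          simp only [exitSeq, exitStep, hi, if_true]
          field_simp
  · rw [exitSeq_succ_of_notMem hi]
    linarith [hq.jumpSum_le_rate (hq.exitSeq_mem_Icc F (n + 1)) i]

lemma tendsto_exitSeq_zero (hq : IsQMatrix q) {F : ℕ → Set E} (hF : Monotone F)
    (hcover : ∀ i, ∃ n, i ∈ F n) (huniq : ∀ u, IsLamSolution q 1 u → u = 0) (i : E) :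
    Tendsto (exitSeq q F · i) atTop (𝓝 0) := by
  set Z : E → ℝ := fun i => ⨅ n, exitSeq q F n i
  have hZ : ∀ i, Tendsto (exitSeq q F · i) atTop (𝓝 (Z i)) := fun i =>
    tendsto_atTop_ciInf (antitone_nat_of_succ_le fun n => hq.exitSeq_succ_le hF n i)
      ⟨0, by rintro _ ⟨n, rfl⟩; exact (hq.exitSeq_mem_Icc F n i).1⟩
  have hZIcc : ∀ i, Z i ∈ Icc (0 : ℝ) 1 := fun i =>
    isClosed_Icc.mem_of_tendsto (hZ i) (Eventually.of_forall (hq.exitSeq_mem_Icc F · i))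
  have hZsol : IsLamSolution q 1 Z := by
    refine ⟨hZIcc, fun i => ?_⟩
    obtain ⟨k, hk⟩ := hcover i
    have hstep : ∀ᶠ n in atTop,
        exitSeq q F (n + 1) i = jumpSum q (exitSeq q F n) i / (1 + -q i i) :=
      eventually_atTop.2 ⟨k, fun n hn => by simp [exitSeq, exitStep, hF hn hk]⟩
    have hfix : Z i = jumpSum q Z i / (1 + -q i i) :=
      tendsto_nhds_unique (((hZ i).comp (tendsto_add_atTop_nat 1)).congr' hstep)
        ((hq.tendsto_jumpSum (hq.exitSeq_mem_Icc F) hZ i).div_const _)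
    have hden : 1 + -q i i ≠ 0 := by linarith [hq.rate_nonneg i]
    have hsol : jumpSum q Z i = (1 + -q i i) * Z i := by
      rw [hfix]
      field_simp
    exact hsol ▸ (hq.summable_jump hZIcc i).hasSum
  simpa [show Z = 0 from huniq Z hZsol] using hZ i

lemma jumpSum_tsum_le (hq : IsQMatrix q) {x : ℕ → E → ℝ} {i : E} {C : ℝ}
    (hx : ∀ m j, x m j ∈ Icc (0 : ℝ) 1) (hsum : ∀ j, Summable (x · j))
    (hsuper : ∀ m, jumpSum q (x m) i ≤ C * x m i) :
    (Summable fun j => if j = i then 0 else q i j * ∑' m, x m j) ∧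
      jumpSum q (fun j => ∑' m, x m j) i ≤ C * ∑' m, x m i := by
  have hterm : ∀ j, (if j = i then 0 else q i j * ∑' m, x m j)
      = ∑' m, if j = i then 0 else q i j * x m j := fun j => by
    split_ifs <;> simp [tsum_mul_left]
  have hpartial : ∀ s : Finset E,
      ∑ j ∈ s, (if j = i then 0 else q i j * ∑' m, x m j) ≤ C * ∑' m, x m i := fun s => by
    have hle : ∀ m, ∑ j ∈ s, (if j = i then 0 else q i j * x m j) ≤ C * x m i := fun m =>
      ((hq.summable_jump (hx m) i).sum_le_tsum s fun j _ =>
        hq.jump_term_nonneg (fun j => (hx m j).1) i j).trans (hsuper m)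
    rw [Finset.sum_congr rfl fun j _ => hterm j, ← Summable.tsum_finsetSum fun j _ => by
      by_cases h : j = i <;> simp [h, (hsum j).mul_left], ← tsum_mul_left]
    exact Summable.tsum_le_tsum hle
      (((hsum i).mul_left C).of_nonneg_of_le (fun m => Finset.sum_nonneg fun j _ =>
        hq.jump_term_nonneg (fun j => (hx m j).1) i j) hle) ((hsum i).mul_left C)
  have hs := summable_of_sum_le
    (hq.jump_term_nonneg (fun j => tsum_nonneg fun m => (hx m j).1) i) hpartial
  exact ⟨hs, hs.tsum_le_of_sum_le hpartial⟩

end IsQMatrix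

lemma exists_strictMono_forall_summable [Countable E] {f : ℕ → E → ℝ}
    (hf0 : ∀ n i, 0 ≤ f n i) (hf : ∀ i, Tendsto (f · i) atTop (𝓝 0)) :
    ∃ ns : ℕ → ℕ, StrictMono ns ∧ ∀ i, Summable fun m => f (ns m) i := by
  obtain ⟨e, he⟩ := Countable.exists_injective_nat E
  have hsmall : ∀ m, ∀ᶠ n in atTop, ∀ i ∈ e ⁻¹' Iic m, f n i ≤ (1 / 2) ^ m := fun m =>
    ((finite_Iic m).preimage he.injOn).eventually_all.2 fun i _ =>
      ((hf i).eventually_le_const (by positivity))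
  obtain ⟨ns, hns, hle⟩ := extraction_forall_of_eventually hsmall
  refine ⟨ns, hns, fun i => (summable_nat_add_iff (e i)).1 ?_⟩
  exact (summable_geometric_two.comp_injective (add_left_injective (e i))).of_nonneg_of_le
    (fun m => hf0 _ i) fun m => hle (m + e i) i (Nat.le_add_left _ _)

theorem IsQMatrix.exists_exhaustion_drift [Countable E] (hq : IsQMatrix q)
    (huniq : ∀ u, IsLamSolution q 1 u → u = 0) :
    ∃ (En : ℕ → Set E) (φ : E → ℝ),
      (∀ n, (En n).Finite) ∧ (∀ n, En n ⊆ En (n + 1)) ∧ (⋃ n, En n) = Set.univ ∧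
      (∀ i, 0 ≤ φ i) ∧ (∀ M : ℝ, ∃ N : ℕ, ∀ n ≥ N, ∀ i ∉ En n, M ≤ φ i) ∧
      (∃ c : ℝ, DriftLE q φ c) := by
  obtain ⟨e, he⟩ := Countable.exists_injective_nat E
  set F : ℕ → Set E := fun n => e ⁻¹' Iic n
  have hF : Monotone F := fun a b hab i (hi : e i ≤ a) => hi.trans hab
  have hcover : ∀ i, i ∈ F (e i) := fun i => le_refl (e i)
  set x : ℕ → E → ℝ := fun n => exitSeq q F (n + 1)
  have hx : ∀ n j, x n j ∈ Icc (0 : ℝ) 1 := fun n => hq.exitSeq_mem_Icc F (n + 1)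
  obtain ⟨ns, hns, hsum⟩ := exists_strictMono_forall_summable (fun n j => (hx n j).1)
    fun i => (hq.tendsto_exitSeq_zero hF (fun i => ⟨e i, hcover i⟩) huniq i).comp
      (tendsto_add_atTop_nat 1)
  refine ⟨fun n => F (ns n), fun i => ∑' m, x (ns m) i,
    fun n => (finite_Iic (ns n)).preimage he.injOn, fun n => hF (hns.monotone n.le_succ),
    eq_univ_of_forall fun i => mem_iUnion.2 ⟨e i, hF hns.le_apply (hcover i)⟩,
    fun i => tsum_nonneg fun m => (hx _ i).1, fun M => ⟨⌈M⌉₊, fun n hn i hi => ?_⟩,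
    1, fun i => ?_⟩
  · have hone : ∀ m ∈ Finset.range (n + 1), x (ns m) i = 1 := fun m hm =>
      exitSeq_succ_of_notMem fun him =>
        hi (hF (hns.monotone (Finset.mem_range_succ_iff.1 hm)) him)
    calc M ≤ n + 1 := (Nat.le_ceil M).trans (by exact_mod_cast hn.trans n.le_succ)
      _ = ∑ m ∈ Finset.range (n + 1), x (ns m) i := by simp [Finset.sum_congr rfl hone]
      _ ≤ ∑' m, x (ns m) i := (hsum i).sum_le_tsum _ fun m _ => (hx _ i).1
  · obtain ⟨hs, hle⟩ := hq.jumpSum_tsum_le (fun m => hx (ns m)) hsum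
      fun m => hq.jumpSum_exitSeq_le hF (ns m) i
    refine ⟨hs, ?_⟩
    change jumpSum q _ i - -q i i * ∑' m, x (ns m) i ≤ 1 * ∑' m, x (ns m) i
    linarith

end

/-- Theorem 5 (uniqueness criterion with finite exhausting sets, via criterion
(C3)): the `Q`-process is unique (i.e. for every `λ > 0` the only `λ`-solution
is `0`) iff conditions (U1)′ and (U2) hold simultaneously. -/
theorem uniqueness_criterion_finite {E : Type*} [Countable E] (q : E → E → ℝ)
    (hq : IsQMatrix q) :
    (∀ lam : ℝ, 0 < lam → ∀ u : E → ℝ, IsLamSolution q lam u → u = 0) ↔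
      ∃ (En : ℕ → Set E) (φ : E → ℝ),
        -- (U1)′
        (∀ n, (En n).Finite) ∧
        (∀ n, En n ⊆ En (n + 1)) ∧
        (⋃ n, En n) = Set.univ ∧
        (∀ i, 0 ≤ φ i) ∧
        (∀ M : ℝ, ∃ N : ℕ, ∀ n ≥ N, ∀ i ∉ En n, M ≤ φ i) ∧
        -- (U2)
        (∃ c : ℝ, DriftLE q φ c) := by
  refine ⟨fun huniq => hq.exists_exhaustion_drift (huniq 1 one_pos), ?_⟩
  rintro ⟨En, φ, hfin, -, -, hφ0, hgrow, c, hdrift⟩ lam hlam u hu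
  have hφ : Tendsto φ cofinite atTop := tendsto_atTop.2 fun M => by
    obtain ⟨N, hN⟩ := hgrow M
    exact (hfin N).subset fun i hi => by_contra fun hiN => hi (hN N le_rfl i hiN)
  exact hu.eq_zero_of_drift hq hlam hφ0 hφ hdrift
end

section
/- Independence of λ in criterion (C3): Let q be a totally stable, conservative Q-matrix on a countable set E. If for some λ₀ > 0 there exists a nonzero λ₀-solution, then for every λ > 0 there exists a nonzero λ-solution. Equivalently, the equation (λI − Q)u = 0 with 0 ≤ u ≤ 1 has only the zero solution for some λ > 0 if and only if it has only the zero solution for all λ > 0. -/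
open scoped BigOperators Classical

/-!
Let `u ≠ 0` be a `λ₀`-solution and `λ > 0`. For `c = max 1 (λ / λ₀)`, the weighted Hölder
inequality for the jump weights `q(i,j)` together with the weighted AM-GM inequality shows that
`u ^ c` is a `λ`-subsolution: `(λ + q_i) u(i)^c ≤ ∑_{j ≠ i} q(i,j) u(j)^c`. The map
`v ↦ (∑_{j ≠ i} q(i,j) v(j)) / (λ + q_i)` is monotone on the complete lattice of `[0,1]`-valued
functions, so by Knaster–Tarski its greatest fixed point, a `λ`-solution, dominates every
subsolution, in particular `u ^ c ≠ 0`.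
-/

open Set

namespace Real

theorem inner_le_weight_mul_Lp_tsum_of_nonneg {ι : Type*} {p : ℝ} (hp : 1 ≤ p) {w f : ι → ℝ}
    (hw : ∀ i, 0 ≤ w i) (hf : ∀ i, 0 ≤ f i) (hw_sum : Summable w)
    (hwf_sum : Summable fun i => w i * f i) (hwfp_sum : Summable fun i => w i * f i ^ p) :
    ∑' i, w i * f i ≤ (∑' i, w i) ^ (1 - p⁻¹) * (∑' i, w i * f i ^ p) ^ p⁻¹ := by
  have hp₀ : 0 ≤ p⁻¹ := inv_nonneg.2 (zero_le_one.trans hp)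
  have hp₁ : 0 ≤ 1 - p⁻¹ := sub_nonneg.2 (inv_le_one_of_one_le₀ hp)
  refine hwf_sum.tsum_le_of_sum_le fun s => ?_
  refine (inner_le_weight_mul_Lp_of_nonneg s hp w f hw hf).trans ?_
  have hsw : 0 ≤ ∑ i ∈ s, w i := Finset.sum_nonneg fun i _ => hw i
  have hswfp : 0 ≤ ∑ i ∈ s, w i * f i ^ p :=
    Finset.sum_nonneg fun i _ => mul_nonneg (hw i) (rpow_nonneg (hf i) p)
  have hsw_le := hw_sum.sum_le_tsum s fun i _ => hw i
  have hswfp_le := hwfp_sum.sum_le_tsum s fun i _ => mul_nonneg (hw i) (rpow_nonneg (hf i) p)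
  exact mul_le_mul (rpow_le_rpow hsw hsw_le hp₁) (rpow_le_rpow hswfp hswfp_le hp₀)
    (rpow_nonneg hswfp _) (rpow_nonneg (hsw.trans hsw_le) _)

theorem rpow_one_sub_inv_mul_rpow_inv_le {a b c : ℝ} (ha : 0 ≤ a) (hb : 0 ≤ b) (hc : 1 ≤ c) :
    a ^ (1 - c⁻¹) * (a + c * b) ^ c⁻¹ ≤ a + b := by
  have hc₀ : 0 < c := zero_lt_one.trans_le hc
  calc a ^ (1 - c⁻¹) * (a + c * b) ^ c⁻¹
      ≤ (1 - c⁻¹) * a + c⁻¹ * (a + c * b) :=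
        geom_mean_le_arith_mean2_weighted (sub_nonneg.2 (inv_le_one_of_one_le₀ hc))
          (inv_nonneg.2 hc₀.le) ha (by positivity) (sub_add_cancel 1 c⁻¹)
    _ = a + b := by field_simp; ring

end Real

section

variable {E : Type*} {q : E → E → ℝ}

noncomputable def offDiagRow (q : E → E → ℝ) (i : E) (j : E) : ℝ :=
  if j = i then 0 else q i j

theorem offDiagRow_mul (q : E → E → ℝ) (i : E) (v : E → ℝ) :
    (fun j => offDiagRow q i j * v j) = fun j => if j = i then 0 else q i j * v j := by
  funext j
  by_cases hji : j = i <;> simp [offDiagRow, hji]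

namespace IsQMatrix

variable (hq : IsQMatrix q)
include hq

theorem neg_diag_nonneg (i : E) : 0 ≤ -q i i :=
  neg_nonneg.2 (hq.2.1 i)

theorem add_neg_diag_pos {lam : ℝ} (hlam : 0 < lam) (i : E) : 0 < lam + -q i i :=
  add_pos_of_pos_of_nonneg hlam (hq.neg_diag_nonneg i)

theorem offDiagRow_nonneg (i j : E) : 0 ≤ offDiagRow q i j := by
  unfold offDiagRow
  split_ifs with hji
  · exact le_rfl
  · exact hq.1 i j (Ne.symm hji)

theorem hasSum_offDiagRow (i : E) : HasSum (offDiagRow q i) (-q i i) :=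
  hq.2.2 i

theorem summable_offDiagRow_mul {v : E → ℝ} (hv : ∀ j, v j ∈ Icc (0 : ℝ) 1) (i : E) :
    Summable fun j => offDiagRow q i j * v j :=
  (hq.hasSum_offDiagRow i).summable.of_nonneg_of_le
    (fun j => mul_nonneg (hq.offDiagRow_nonneg i j) (hv j).1)
    (fun j => mul_le_of_le_one_right (hq.offDiagRow_nonneg i j) (hv j).2)

theorem tsum_offDiagRow_mul_le_tsum_offDiagRow_mul {v v' : E → ℝ}
    (hv : ∀ j, v j ∈ Icc (0 : ℝ) 1) (hv' : ∀ j, v' j ∈ Icc (0 : ℝ) 1) (hle : v ≤ v') (i : E) :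
    ∑' j, offDiagRow q i j * v j ≤ ∑' j, offDiagRow q i j * v' j :=
  (hq.summable_offDiagRow_mul hv i).tsum_le_tsum
    (fun j => mul_le_mul_of_nonneg_left (hle j) (hq.offDiagRow_nonneg i j))
    (hq.summable_offDiagRow_mul hv' i)

theorem tsum_offDiagRow_mul_mem_Icc {v : E → ℝ} (hv : ∀ j, v j ∈ Icc (0 : ℝ) 1) (i : E) :
    ∑' j, offDiagRow q i j * v j ∈ Icc 0 (-q i i) := by
  refine ⟨tsum_nonneg fun j => mul_nonneg (hq.offDiagRow_nonneg i j) (hv j).1, ?_⟩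
  rw [← (hq.hasSum_offDiagRow i).tsum_eq]
  exact (hq.summable_offDiagRow_mul hv i).tsum_le_tsum
    (fun j => mul_le_of_le_one_right (hq.offDiagRow_nonneg i j) (hv j).2)
    (hq.hasSum_offDiagRow i).summable

noncomputable def jumpOperator {lam : ℝ} (hlam : 0 < lam) :
    (E → Icc (0 : ℝ) 1) →o (E → Icc (0 : ℝ) 1) where
  toFun v i :=
    ⟨(∑' j, offDiagRow q i j * v j) / (lam + -q i i), by
      have hpos := hq.add_neg_diag_pos hlam i
      have hsum := hq.tsum_offDiagRow_mul_mem_Icc (fun j => (v j).2) i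
      exact ⟨div_nonneg hsum.1 hpos.le, (div_le_one hpos).2 (by linarith [hsum.2])⟩⟩
  monotone' v v' hle i :=
    div_le_div_of_nonneg_right
      (hq.tsum_offDiagRow_mul_le_tsum_offDiagRow_mul (fun j => (v j).2) (fun j => (v' j).2)
        (fun j => hle j) i) (hq.add_neg_diag_pos hlam i).le

theorem exists_isLamSolution_ge_of_driftGE {lam : ℝ} (hlam : 0 < lam) {w : E → ℝ}
    (hw : ∀ i, w i ∈ Icc (0 : ℝ) 1) (hdrift : DriftGE q w lam) :
    ∃ u, IsLamSolution q lam u ∧ w ≤ u := by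
  set T := hq.jumpOperator hlam
  have hpos := hq.add_neg_diag_pos hlam
  let u : E → Icc (0 : ℝ) 1 := T.gfp
  have hsub : (fun i => ⟨w i, hw i⟩ : E → Icc (0 : ℝ) 1) ≤ T fun i => ⟨w i, hw i⟩ := by
    intro i
    change w i ≤ (∑' j, offDiagRow q i j * w j) / (lam + -q i i)
    rw [le_div_iff₀ (hpos i), offDiagRow_mul]
    linarith [(hdrift i).2]
  have hfix : ∀ i, ∑' j, offDiagRow q i j * u j = (lam + -q i i) * u i := fun i => by
    have h : (∑' j, offDiagRow q i j * u j) / (lam + -q i i) = u i :=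
      congrArg Subtype.val (congrFun T.map_gfp i)
    rw [div_eq_iff (hpos i).ne'] at h
    rw [h, mul_comm]
  refine ⟨fun i => u i, ⟨fun i => (u i).2, fun i => ?_⟩, fun i => T.le_gfp hsub i⟩
  rw [← offDiagRow_mul, ← hfix i]
  exact (hq.summable_offDiagRow_mul (fun j => (u j).2) i).hasSum

end IsQMatrix

theorem DriftGE.mono {φ : E → ℝ} {c c' : ℝ} (h : DriftGE q φ c) (hφ : ∀ i, 0 ≤ φ i)
    (hc : c' ≤ c) : DriftGE q φ c' :=
  fun i => ⟨(h i).1, (mul_le_mul_of_nonneg_right hc (hφ i)).trans (h i).2⟩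

namespace IsLamSolution

variable {lam₀ : ℝ} {u : E → ℝ}

theorem rpow_mem_Icc (hu : IsLamSolution q lam₀ u) {c : ℝ} (hc : 0 ≤ c) (i : E) :
    u i ^ c ∈ Icc (0 : ℝ) 1 :=
  ⟨Real.rpow_nonneg (hu.1 i).1 c, Real.rpow_le_one (hu.1 i).1 (hu.1 i).2 hc⟩

theorem driftGE_rpow (hu : IsLamSolution q lam₀ u) (hq : IsQMatrix q) (hlam₀ : 0 < lam₀)
    {c : ℝ} (hc : 1 ≤ c) : DriftGE q (fun i => u i ^ c) (c * lam₀) := by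
  intro i
  have huc := hu.rpow_mem_Icc (zero_le_one.trans hc)
  have hsumm := hq.summable_offDiagRow_mul huc i
  refine ⟨by simpa only [offDiagRow_mul] using hsumm, ?_⟩
  rw [← offDiagRow_mul]
  have holder : (lam₀ + -q i i) * u i
      ≤ (-q i i) ^ (1 - c⁻¹) * (∑' j, offDiagRow q i j * u j ^ c) ^ c⁻¹ := by
    rw [← (hu.2 i).tsum_eq, ← offDiagRow_mul, ← (hq.hasSum_offDiagRow i).tsum_eq]
    exact Real.inner_le_weight_mul_Lp_tsum_of_nonneg hc (hq.offDiagRow_nonneg i)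
      (fun j => (hu.1 j).1) (hq.hasSum_offDiagRow i).summable
      (hq.summable_offDiagRow_mul hu.1 i) hsumm
  set A := -q i i
  set M := ∑' j, offDiagRow q i j * u j ^ c
  have hc₀ : 0 < c := zero_lt_one.trans_le hc
  have hA : 0 ≤ A := hq.neg_diag_nonneg i
  have hM : 0 ≤ M := (hq.tsum_offDiagRow_mul_mem_Icc huc i).1
  have hAc : 0 ≤ A + c * lam₀ := add_nonneg hA (mul_nonneg hc₀.le hlam₀.le)
  have key : u i * (A + c * lam₀) ^ c⁻¹ ≤ M ^ c⁻¹ := by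
    refine le_of_mul_le_mul_left ?_ (hq.add_neg_diag_pos hlam₀ i)
    calc (lam₀ + A) * (u i * (A + c * lam₀) ^ c⁻¹)
        = (lam₀ + A) * u i * (A + c * lam₀) ^ c⁻¹ := by ring
      _ ≤ A ^ (1 - c⁻¹) * M ^ c⁻¹ * (A + c * lam₀) ^ c⁻¹ :=
          mul_le_mul_of_nonneg_right holder (by positivity)
      _ = A ^ (1 - c⁻¹) * (A + c * lam₀) ^ c⁻¹ * M ^ c⁻¹ := by ring
      _ ≤ (A + lam₀) * M ^ c⁻¹ :=
          mul_le_mul_of_nonneg_right (Real.rpow_one_sub_inv_mul_rpow_inv_le hA hlam₀.le hc)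
            (by positivity)
      _ = (lam₀ + A) * M ^ c⁻¹ := by ring
  rw [Real.le_rpow_inv_iff_of_pos (mul_nonneg (hu.1 i).1 (by positivity)) hM hc₀,
    Real.mul_rpow (hu.1 i).1 (by positivity), Real.rpow_inv_rpow hAc hc₀.ne'] at key
  linarith

theorem exists_ne_zero (hu : IsLamSolution q lam₀ u) (hq : IsQMatrix q) (hlam₀ : 0 < lam₀)
    {lam : ℝ} (hlam : 0 < lam) (hne : u ≠ 0) : ∃ v, IsLamSolution q lam v ∧ v ≠ 0 := by
  set c := max 1 (lam / lam₀)
  have hc : 1 ≤ c := le_max_left _ _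
  have hlam_le : lam ≤ c * lam₀ := (div_le_iff₀ hlam₀).1 (le_max_right _ _)
  have huc := hu.rpow_mem_Icc (zero_le_one.trans hc)
  obtain ⟨v, hv, huv⟩ := hq.exists_isLamSolution_ge_of_driftGE hlam huc
    ((hu.driftGE_rpow hq hlam₀ hc).mono (fun i => (huc i).1) hlam_le)
  obtain ⟨i, hi⟩ := Function.ne_iff.1 hne
  have hui : 0 < u i ^ c := Real.rpow_pos_of_pos (lt_of_le_of_ne (hu.1 i).1 (Ne.symm hi)) c
  exact ⟨v, hv, fun hv0 => hui.not_ge (by simpa [hv0] using huv i)⟩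

end IsLamSolution

end

theorem lambda_independence_general {E : Type*} (q : E → E → ℝ)
    (hq : IsQMatrix q) :
    (∀ lam₀ : ℝ, 0 < lam₀ → (∃ u : E → ℝ, IsLamSolution q lam₀ u ∧ u ≠ 0) →
      ∀ lam : ℝ, 0 < lam → ∃ u : E → ℝ, IsLamSolution q lam u ∧ u ≠ 0) ∧
    ((∃ lam : ℝ, 0 < lam ∧ ∀ u : E → ℝ, IsLamSolution q lam u → u = 0) ↔
      (∀ lam : ℝ, 0 < lam → ∀ u : E → ℝ, IsLamSolution q lam u → u = 0)) := by
  refine ⟨fun lam₀ hlam₀ ⟨u, hu, hne⟩ lam hlam => hu.exists_ne_zero hq hlam₀ hlam hne, ?_,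
    fun h => ⟨1, one_pos, h 1 one_pos⟩⟩
  rintro ⟨lam, hlam, huniq⟩ lam' hlam' u hu
  by_contra hne
  obtain ⟨v, hv, hvne⟩ := hu.exists_ne_zero hq hlam' hlam hne
  exact hvne (huniq v hv)

/-- Independence of `λ` in criterion (C3): if for some `λ₀ > 0` there is a
nonzero `λ₀`-solution, then for every `λ > 0` there is a nonzero `λ`-solution.
Equivalently, `(λ I - Q) u = 0`, `0 ≤ u ≤ 1` has only the zero solution for
some `λ > 0` iff it does for all `λ > 0`. -/
theorem lambda_independence {E : Type*} [Countable E] (q : E → E → ℝ)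
    (hq : IsQMatrix q) :
    (∀ lam₀ : ℝ, 0 < lam₀ → (∃ u : E → ℝ, IsLamSolution q lam₀ u ∧ u ≠ 0) →
      ∀ lam : ℝ, 0 < lam → ∃ u : E → ℝ, IsLamSolution q lam u ∧ u ≠ 0) ∧
    ((∃ lam : ℝ, 0 < lam ∧ ∀ u : E → ℝ, IsLamSolution q lam u → u = 0) ↔
      (∀ lam : ℝ, 0 < lam → ∀ u : E → ℝ, IsLamSolution q lam u → u = 0)) :=
  lambda_independence_general q hq
end

section
/- Uniqueness for Schlögl's second model (Example 1, via criterion (C3)): Let S be a finite nonempty set, β₀, β₂, δ₁, δ₃ > 0, b(k) = β₀ + β₂·k·(k−1), a(k) = δ₁·k + δ₃·k·(k−1)·(k−2), and let p : S × S → [0,∞) satisfy p(u,u) = 0 and ∑_{v ∈ S} p(u,v) = 1 for every u. Let q be the Q-matrix on E = ℕ^S defined by: q(i, i^{u+}) = b(i_u); q(i, i^{u−}) = a(i_u) when i_u ≥ 1; q(i, i^{u,v}) = i_u·p(u,v) when i_u ≥ 1 and u ≠ v; q(i,i) = −∑_{u}(b(i_u) + a(i_u) + i_u); and q(i,j) =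 0 for all other j ≠ i (rates to coinciding target states being added). Then q is a totally stable, conservative Q-matrix and for every λ > 0 the only λ-solution is u = 0 (equivalently, the corresponding Q-process is unique). -/
open scoped BigOperators Classical

/-- The Q-matrix of Schlögl's second model on `E = ℕ^S`: in each vessel `u`
there is a birth rate `b (i u) = β₀ + β₂ i_u (i_u - 1)` towards `i^{u+}`, a
death rate `a (i u) = δ₁ i_u + δ₃ i_u (i_u - 1)(i_u - 2)` towards `i^{u-}`
(when `i_u ≥ 1`), and a migration rate `i_u p(u,v)` towards `i^{u,v}` (when
`i_u ≥ 1` and `u ≠ v`); rates to coinciding target states are added, the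
diagonal entry is `-∑_u (b (i u) + a (i u) + i_u)`, and all other entries
vanish. -/
noncomputable def schloglQ (S : Type*) [Fintype S] [DecidableEq S]
    (β₀ β₂ δ₁ δ₃ : ℝ) (p : S → S → ℝ) : (S → ℕ) → (S → ℕ) → ℝ :=
  fun i j =>
    if j = i then
      -(∑ u : S, ((β₀ + β₂ * (i u : ℝ) * ((i u : ℝ) - 1)) +
        (δ₁ * (i u : ℝ) + δ₃ * (i u : ℝ) * ((i u : ℝ) - 1) * ((i u : ℝ) - 2)) +
        (i u : ℝ)))
    else
      ∑ u : S,
        ((if j = Function.update i u (i u + 1) then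
            β₀ + β₂ * (i u : ℝ) * ((i u : ℝ) - 1) else 0) +
         (if 1 ≤ i u ∧ j = Function.update i u (i u - 1) then
            δ₁ * (i u : ℝ) + δ₃ * (i u : ℝ) * ((i u : ℝ) - 1) * ((i u : ℝ) - 2)
          else 0) +
         ∑ v : S,
           (if u ≠ v ∧ 1 ≤ i u ∧
                j = Function.update (Function.update i u (i u - 1)) v (i v + 1)
            then (i u : ℝ) * p u v else 0))

/-!
Write `|i| = ∑_u i_u`. Births raise `|i|` by one, deaths lower it by one and migrations keep it,
so `Q|i| = ∑_u (b(i_u) - a(i_u))`, which is bounded above because the cubic death rate beats the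
quadratic birth rate. Hence, given `λ > 0`, for small `e > 0` the function `φ = 1 + e|i|`
satisfies `Qφ ≤ λφ` and tends to infinity. For a `λ`-solution `u` and `ε > 0`, the function
`u - εφ` is positive only on a finite set since `u ≤ 1`; at a positive maximum `i₀` it would give
`λ u(i₀) = ∑_j q(i₀,j) (u(j) - u(i₀)) ≤ ε (Qφ)(i₀) ≤ λ ε φ(i₀) < λ u(i₀)`.
So `u ≤ εφ` for every `ε > 0`, whence `u = 0`.
-/

open Filter

section QMatrix

variable {E : Type*} {q : E → E → ℝ}

theorem IsQMatrix.hasSum_mul_sub (hq : IsQMatrix q) {f : E → ℝ} {i : E} {s : ℝ}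
    (hf : HasSum (fun j => if j = i then 0 else q i j * f j) s) :
    HasSum (fun j => if j = i then 0 else q i j * (f j - f i)) (s - -q i i * f i) := by
  refine (hf.sub ((hq.2.2 i).mul_right (f i))).congr_fun fun j => ?_
  split_ifs <;> ring

theorem IsQMatrix.lam_mul_le_of_sub_le (hq : IsQMatrix q) {lam c ε : ℝ} {u φ : E → ℝ} {i₀ : E}
    (hu : HasSum (fun j => if j = i₀ then 0 else q i₀ j * u j) ((lam + -q i₀ i₀) * u i₀))
    (hdrift : DriftLE q φ c) (hε : 0 ≤ ε) (hmax : ∀ j, u j - u i₀ ≤ ε * (φ j - φ i₀)) :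
    lam * u i₀ ≤ ε * (c * φ i₀) := by
  have hu' := hq.hasSum_mul_sub hu
  have hφ' := (hq.hasSum_mul_sub (hdrift i₀).1.hasSum).mul_left ε
  calc lam * u i₀ = (lam + -q i₀ i₀) * u i₀ - -q i₀ i₀ * u i₀ := by ring
    _ ≤ ε * ((∑' j, if j = i₀ then 0 else q i₀ j * φ j) - -q i₀ i₀ * φ i₀) := by
      refine hasSum_le (fun j => ?_) hu' hφ'
      split_ifs with hj
      · simp
      · rw [mul_left_comm]
        exact mul_le_mul_of_nonneg_left (hmax j) (hq.1 i₀ j (Ne.symm hj))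
    _ ≤ ε * (c * φ i₀) := mul_le_mul_of_nonneg_left (hdrift i₀).2 hε

theorem IsLamSolution.eq_zero_of_driftLE (hq : IsQMatrix q) {lam c : ℝ} {u φ : E → ℝ}
    (hu : IsLamSolution q lam u) (hlam : 0 < lam) (hc : c ≤ lam) (hφ0 : ∀ i, 0 ≤ φ i)
    (hφ : Tendsto φ cofinite atTop) (hdrift : DriftLE q φ c) : u = 0 := by
  have hdom : ∀ ε > 0, ∀ i, u i ≤ ε * φ i := by
    intro ε hε
    by_contra! ⟨i₁, hi₁⟩
    set A := {i | ε * φ i < u i}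
    have hA : A.Finite := by
      refine (eventually_cofinite.1 (tendsto_atTop.1 hφ ε⁻¹)).subset fun i (hi : ε * φ i < u i) => ?_
      rw [Set.mem_ofPred_eq, not_le, ← mul_lt_mul_iff_right₀ hε, mul_inv_cancel₀ hε.ne']
      linarith [(hu.1 i).2]
    obtain ⟨i₀, hi₀, hmax⟩ := A.exists_max_image (fun i => u i - ε * φ i) hA ⟨i₁, hi₁⟩
    have hmax' : ∀ j, u j - u i₀ ≤ ε * (φ j - φ i₀) := by
      intro j
      by_cases hj : j ∈ A
      · linarith [hmax j hj]
      · have hj : u j ≤ ε * φ j := not_lt.1 hj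
        linarith [show ε * φ i₀ < u i₀ from hi₀]
    have hle := hq.lam_mul_le_of_sub_le (hu.2 i₀) hdrift hε.le hmax'
    have hlt := mul_lt_mul_of_pos_left (show ε * φ i₀ < u i₀ from hi₀) hlam
    have hcφ := mul_le_mul_of_nonneg_right hc (mul_nonneg hε.le (hφ0 i₀))
    linarith
  funext i
  refine le_antisymm (le_of_forall_pos_le_add fun δ hδ => ?_) (hu.1 i).1
  have hφi : 0 < φ i + 1 := by linarith [hφ0 i]
  calc u i ≤ δ / (φ i + 1) * φ i := hdom _ (div_pos hδ hφi) i
    _ ≤ 0 + δ := by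
      rw [zero_add, div_mul_eq_mul_div, div_le_iff₀ hφi]
      nlinarith

theorem IsQMatrix.exists_driftLE_one_add_mul (hq : IsQMatrix q) {ψ s : E → ℝ} {D c : ℝ}
    (hψ : ∀ i, HasSum (fun j => if j = i then 0 else q i j * ψ j) (s i))
    (hD : ∀ i, s i - -q i i * ψ i ≤ D) (hψ0 : ∀ i, 0 ≤ ψ i) (hc : 0 < c) :
    ∃ e > 0, DriftLE q (fun i => 1 + e * ψ i) c := by
  have hmax : 0 < max D 1 := lt_max_of_lt_right one_pos
  set e := c / max D 1
  have he : 0 < e := div_pos hc hmax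
  refine ⟨e, he, fun i => ?_⟩
  have hsum : HasSum (fun j => if j = i then 0 else q i j * (1 + e * ψ j)) (-q i i + e * s i) :=
    ((hq.2.2 i).add ((hψ i).mul_left e)).congr_fun fun j => by split_ifs <;> ring
  refine ⟨hsum.summable, ?_⟩
  rw [hsum.tsum_eq]
  calc -q i i + e * s i - -q i i * (1 + e * ψ i) = e * (s i - -q i i * ψ i) := by ring
    _ ≤ e * max D 1 := mul_le_mul_of_nonneg_left ((hD i).trans (le_max_left D 1)) he.le
    _ = c := div_mul_cancel₀ c hmax.ne'
    _ ≤ c * (1 + e * ψ i) :=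
      le_mul_of_one_le_right hc.le (le_add_of_nonneg_right (mul_nonneg he.le (hψ0 i)))

end QMatrix

section JumpQ

variable {E K : Type*} [Fintype K]

noncomputable def jumpQ (rate : E → K → ℝ) (target : E → K → E) : E → E → ℝ :=
  fun i j => if j = i then -∑ k, rate i k else ∑ k, if j = target i k then rate i k else 0

variable {rate : E → K → ℝ} {target : E → K → E}

theorem hasSum_jumpQ_mul (htarget : ∀ i k, target i k = i → rate i k = 0) (f : E → ℝ) (i : E) :
    HasSum (fun j => if j = i then 0 else jumpQ rate target i j * f j)
      (∑ k, rate i k * f (target i k)) := by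
  refine (hasSum_sum fun k _ => hasSum_ite_eq (target i k) (rate i k * f (target i k))).congr_fun
    fun j => ?_
  by_cases hj : j = i
  · subst hj
    refine (if_pos rfl).trans (Finset.sum_eq_zero fun k _ => ?_).symm
    split_ifs with h
    · rw [htarget j k h.symm, zero_mul]
    · rfl
  · rw [if_neg hj, jumpQ, if_neg hj, Finset.sum_mul]
    refine Finset.sum_congr rfl fun k _ => ?_
    split_ifs with h
    · rw [h]
    · rw [zero_mul]

theorem isQMatrix_jumpQ (hrate : ∀ i k, 0 ≤ rate i k)
    (htarget : ∀ i k, target i k = i → rate i k = 0) : IsQMatrix (jumpQ rate target) := by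
  refine ⟨fun i j hij => ?_, fun i => ?_, fun i => ?_⟩
  · rw [jumpQ, if_neg hij.symm]
    exact Finset.sum_nonneg fun k _ => by split_ifs <;> simp [hrate]
  · rw [jumpQ, if_pos rfl, neg_nonpos]
    exact Finset.sum_nonneg fun k _ => hrate i k
  · rw [jumpQ, if_pos rfl, neg_neg]
    simpa using hasSum_jumpQ_mul htarget 1 i

theorem jumpQ_generator (f : E → ℝ) (i : E) :
    ∑ k, rate i k * f (target i k) - -jumpQ rate target i i * f i =
      ∑ k, rate i k * (f (target i k) - f i) := by
  rw [jumpQ, if_pos rfl, neg_neg, Finset.sum_mul, ← Finset.sum_sub_distrib]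
  simp only [mul_sub]

end JumpQ

theorem natCast_mul_sub_one_nonneg (k : ℕ) : 0 ≤ (k : ℝ) * (k - 1) := by
  rcases k with _ | k
  · simp
  · push_cast; nlinarith [k.cast_nonneg (α := ℝ)]

theorem natCast_mul_sub_one_mul_sub_two_nonneg (k : ℕ) : 0 ≤ (k : ℝ) * (k - 1) * (k - 2) := by
  rcases k with _ | _ | k
  · simp
  · simp
  · push_cast
    have hk : (0 : ℝ) ≤ k := k.cast_nonneg
    have : (0 : ℝ) ≤ (k + 2) * (k + 1) := by positivity
    nlinarith [mul_nonneg this hk]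

theorem sum_natCast_update {S : Type*} [Fintype S] [DecidableEq S] (i : S → ℕ) (u : S) (x : ℕ) :
    ∑ w, (Function.update i u x w : ℝ) = ∑ w, (i w : ℝ) + (x - i u) := by
  have hcast : ∀ w, (Function.update i u x w : ℝ) = Function.update (fun w => (i w : ℝ)) u x w :=
    fun w => by rcases eq_or_ne w u with rfl | h <;> simp [*]
  rw [Finset.sum_congr rfl fun w _ => hcast w, Finset.sum_update_of_mem (Finset.mem_univ u),
    Finset.sum_eq_add_sum_sdiff_singleton_of_mem (Finset.mem_univ u)]
  ring

theorem tendsto_sum_natCast_cofinite_atTop {S : Type*} [Fintype S] :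
    Tendsto (fun i : S → ℕ => ∑ w, (i w : ℝ)) cofinite atTop := by
  refine tendsto_atTop.2 fun M => eventually_cofinite.2 <|
    (Set.Finite.pi fun _ => Set.finite_Iic ⌈M⌉₊).subset fun i hi w _ => ?_
  have hi : ∑ w, (i w : ℝ) < M := not_le.1 hi
  have hw : (i w : ℝ) ≤ ∑ w, (i w : ℝ) :=
    Finset.single_le_sum (fun w _ => (i w).cast_nonneg) (Finset.mem_univ w)
  exact Nat.cast_le.1 ((hw.trans hi.le).trans (Nat.le_ceil M))

section Schlogl

variable {S : Type*}

def schloglBirth (β₀ β₂ : ℝ) (k : ℕ) : ℝ := β₀ + β₂ * (k : ℝ) * ((k : ℝ) - 1)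

def schloglDeath (δ₁ δ₃ : ℝ) (k : ℕ) : ℝ :=
  δ₁ * (k : ℝ) + δ₃ * (k : ℝ) * ((k : ℝ) - 1) * ((k : ℝ) - 2)

theorem schloglBirth_sub_schloglDeath_le {β₂ δ₁ δ₃ : ℝ} (β₀ : ℝ) (hβ₂ : 0 ≤ β₂) (hδ₁ : 0 ≤ δ₁)
    (hδ₃ : 0 < δ₃) (k : ℕ) :
    schloglBirth β₀ β₂ k - schloglDeath δ₁ δ₃ k ≤ β₀ + β₂ * (β₂ / δ₃ + 2) ^ 2 := by
  have hk : (0 : ℝ) ≤ k := k.cast_nonneg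
  have h1 := natCast_mul_sub_one_nonneg k
  have h2 := natCast_mul_sub_one_mul_sub_two_nonneg k
  suffices β₂ * k * (k - 1) - δ₃ * k * (k - 1) * (k - 2) ≤ β₂ * (β₂ / δ₃ + 2) ^ 2 by
    simp only [schloglBirth, schloglDeath]
    nlinarith [mul_nonneg hδ₁ hk]
  rcases le_or_gt (k : ℝ) (β₂ / δ₃ + 2) with h | h
  · have hsq : (k : ℝ) * (k - 1) ≤ (β₂ / δ₃ + 2) ^ 2 := by nlinarith
    nlinarith [mul_le_mul_of_nonneg_left hsq hβ₂, mul_nonneg hδ₃.le h2]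
  · have hβ : β₂ / δ₃ < k - 2 := by linarith
    rw [div_lt_iff₀ hδ₃] at hβ
    nlinarith [mul_le_mul_of_nonneg_left hβ.le h1, mul_nonneg hβ₂ (sq_nonneg (β₂ / δ₃ + 2))]

/-- Jump channels of Schlögl's model: `inl u` a birth in vessel `u`, `inr (inl u)` a death in
`u`, `inr (inr (u, v))` a migration from `u` to `v`. -/
def schloglRate (β₀ β₂ δ₁ δ₃ : ℝ) (p : S → S → ℝ) (i : S → ℕ) : S ⊕ S ⊕ S × S → ℝ
  | .inl u => schloglBirth β₀ β₂ (i u)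
  | .inr (.inl u) => schloglDeath δ₁ δ₃ (i u)
  | .inr (.inr (u, v)) => i u * p u v

theorem schloglRate_nonneg {β₀ β₂ δ₁ δ₃ : ℝ} (hβ₀ : 0 ≤ β₀) (hβ₂ : 0 ≤ β₂) (hδ₁ : 0 ≤ δ₁)
    (hδ₃ : 0 ≤ δ₃) {p : S → S → ℝ} (hp0 : ∀ u v, 0 ≤ p u v) (i : S → ℕ) (k : S ⊕ S ⊕ S × S) :
    0 ≤ schloglRate β₀ β₂ δ₁ δ₃ p i k := by
  rcases k with u | u | ⟨u, v⟩
  · have := mul_nonneg hβ₂ (natCast_mul_sub_one_nonneg (i u))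
    simp only [schloglRate, schloglBirth]
    linarith
  · have := mul_nonneg hδ₃ (natCast_mul_sub_one_mul_sub_two_nonneg (i u))
    have := mul_nonneg hδ₁ (i u).cast_nonneg (α := ℝ)
    simp only [schloglRate, schloglDeath]
    linarith
  · exact mul_nonneg (Nat.cast_nonneg _) (hp0 u v)

variable [DecidableEq S]

/-- At `i u = 0` the truncated subtraction makes the death and migration targets out of `u`
degenerate, but then the corresponding rates vanish. -/
def schloglTarget (i : S → ℕ) : S ⊕ S ⊕ S × S → S → ℕ
  | .inl u => Function.update i u (i u + 1)
  | .inr (.inl u) => Function.update i u (i u - 1)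
  | .inr (.inr (u, v)) => Function.update (Function.update i u (i u - 1)) v (i v + 1)

theorem schloglRate_eq_zero_of_target_eq (β₀ β₂ δ₁ δ₃ : ℝ) (p : S → S → ℝ) (i : S → ℕ)
    (k : S ⊕ S ⊕ S × S) (hk : schloglTarget i k = i) : schloglRate β₀ β₂ δ₁ δ₃ p i k = 0 := by
  rcases k with u | u | ⟨u, v⟩
  · simpa [schloglTarget] using congrFun hk u
  · have : i u - 1 = i u := by simpa [schloglTarget] using congrFun hk u
    replace : i u = 0 := by omega
    simp [schloglRate, schloglDeath, this]
  · by_cases huv : u = v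
    · subst huv
      simpa [schloglTarget] using congrFun hk u
    · simpa [schloglTarget] using congrFun hk v

theorem schloglQ_eq_jumpQ [Fintype S] (β₀ β₂ δ₁ δ₃ : ℝ) (p : S → S → ℝ)
    (hpd : ∀ u, p u u = 0) (hp1 : ∀ u, ∑ v, p u v = 1) :
    schloglQ S β₀ β₂ δ₁ δ₃ p = jumpQ (schloglRate β₀ β₂ δ₁ δ₃ p) schloglTarget := by
  funext i j
  simp only [schloglQ, jumpQ, Fintype.sum_sum_type, Fintype.sum_prod_type, ← Finset.sum_add_distrib]
  by_cases hj : j = i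
  · rw [if_pos hj, if_pos hj]
    refine congrArg _ (Finset.sum_congr rfl fun u _ => ?_)
    simp only [schloglRate, schloglBirth, schloglDeath, ← Finset.mul_sum, hp1, mul_one]
    ring
  · rw [if_neg hj, if_neg hj]
    refine Finset.sum_congr rfl fun u _ => ?_
    simp only [schloglTarget, schloglRate, schloglBirth, schloglDeath, add_assoc]
    rcases Nat.eq_zero_or_pos (i u) with h0 | hpos
    · simp [h0]
    · simp only [Nat.one_le_iff_ne_zero.2 hpos.ne', true_and]
      -- the `congr`s identify the two `Decidable` instances of the equality tests
      congr 2
      · congr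
      refine Finset.sum_congr rfl fun v _ => ?_
      rcases eq_or_ne u v with rfl | huv
      · simp [hpd]
      · simp only [ne_eq, huv, not_false_eq_true, true_and]
        congr

theorem schloglRate_mul_count_sub [Fintype S] (β₀ β₂ δ₁ δ₃ : ℝ) (p : S → S → ℝ)
    (hpd : ∀ u, p u u = 0) (i : S → ℕ) :
    ∑ k, schloglRate β₀ β₂ δ₁ δ₃ p i k *
        (∑ w, (schloglTarget i k w : ℝ) - ∑ w, (i w : ℝ)) =
      ∑ u, (schloglBirth β₀ β₂ (i u) - schloglDeath δ₁ δ₃ (i u)) := by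
  simp only [Fintype.sum_sum_type, Fintype.sum_prod_type, schloglRate, schloglTarget,
    sum_natCast_update, ← Finset.sum_add_distrib]
  refine Finset.sum_congr rfl fun u _ => ?_
  rcases Nat.eq_zero_or_pos (i u) with h0 | hpos
  · simp [h0, schloglDeath]
  have hmig : ∀ v, (i u : ℝ) * p u v * (∑ w, (i w : ℝ) + ((i u - 1 : ℕ) - i u) +
      ((i v + 1 : ℕ) - (Function.update i u (i u - 1) v : ℕ)) - ∑ w, (i w : ℝ)) = 0 := by
    intro v
    rcases eq_or_ne u v with rfl | huv
    · simp [hpd]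
    · rw [Function.update_of_ne huv.symm, Nat.cast_sub hpos]
      push_cast
      ring
  rw [Finset.sum_eq_zero fun v _ => hmig v, Nat.cast_sub hpos]
  push_cast
  ring

end Schlogl

theorem schlogl_uniqueness_general (S : Type*) [Fintype S] [DecidableEq S]
    (β₀ β₂ δ₁ δ₃ : ℝ) (hβ₀ : 0 < β₀) (hβ₂ : 0 < β₂) (hδ₁ : 0 < δ₁)
    (hδ₃ : 0 < δ₃) (p : S → S → ℝ) (hp0 : ∀ u v, 0 ≤ p u v)
    (hpd : ∀ u, p u u = 0) (hp1 : ∀ u, ∑ v : S, p u v = 1) :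
    IsQMatrix (schloglQ S β₀ β₂ δ₁ δ₃ p) ∧
    ∀ lam : ℝ, 0 < lam → ∀ u : (S → ℕ) → ℝ,
      IsLamSolution (schloglQ S β₀ β₂ δ₁ δ₃ p) lam u → u = 0 := by
  rw [schloglQ_eq_jumpQ β₀ β₂ δ₁ δ₃ p hpd hp1]
  have htarget := schloglRate_eq_zero_of_target_eq β₀ β₂ δ₁ δ₃ p
  have hq := isQMatrix_jumpQ (schloglRate_nonneg hβ₀.le hβ₂.le hδ₁.le hδ₃.le hp0) htarget
  refine ⟨hq, fun lam hlam u hu => ?_⟩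
  have hcount : ∀ i : S → ℕ, 0 ≤ ∑ w, (i w : ℝ) := fun i => by positivity
  have hdrift_count : ∀ i : S → ℕ,
      ∑ k, schloglRate β₀ β₂ δ₁ δ₃ p i k * ∑ w, (schloglTarget i k w : ℝ) -
        -jumpQ (schloglRate β₀ β₂ δ₁ δ₃ p) schloglTarget i i * ∑ w, (i w : ℝ) ≤
      Finset.univ.card • (β₀ + β₂ * (β₂ / δ₃ + 2) ^ 2) := fun i => by
    calc _ = ∑ k, schloglRate β₀ β₂ δ₁ δ₃ p i k *
          (∑ w, (schloglTarget i k w : ℝ) - ∑ w, (i w : ℝ)) :=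
          jumpQ_generator (fun j : S → ℕ => ∑ w, (j w : ℝ)) i
      _ = ∑ u, (schloglBirth β₀ β₂ (i u) - schloglDeath δ₁ δ₃ (i u)) :=
          schloglRate_mul_count_sub β₀ β₂ δ₁ δ₃ p hpd i
      _ ≤ _ := Finset.sum_le_card_nsmul _ _ _ fun u _ =>
          schloglBirth_sub_schloglDeath_le β₀ hβ₂.le hδ₁.le hδ₃ (i u)
  obtain ⟨e, he, hφ⟩ :=
    hq.exists_driftLE_one_add_mul (hasSum_jumpQ_mul htarget _) hdrift_count hcount hlam
  exact hu.eq_zero_of_driftLE hq hlam le_rfl (fun i => by positivity)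
    (tendsto_atTop_add_const_left _ 1 (tendsto_sum_natCast_cofinite_atTop.const_mul_atTop he)) hφ

/-- Uniqueness for Schlögl's second model (Example 1, via criterion (C3)):
the matrix `schloglQ` is a totally stable, conservative Q-matrix on the
countable set `ℕ^S` and for every `λ > 0` the only `λ`-solution is `0`
(equivalently, the corresponding `Q`-process is unique). -/
theorem schlogl_uniqueness (S : Type*) [Fintype S] [DecidableEq S] [Nonempty S]
    (β₀ β₂ δ₁ δ₃ : ℝ) (hβ₀ : 0 < β₀) (hβ₂ : 0 < β₂) (hδ₁ : 0 < δ₁)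
    (hδ₃ : 0 < δ₃) (p : S → S → ℝ) (hp0 : ∀ u v, 0 ≤ p u v)
    (hpd : ∀ u, p u u = 0) (hp1 : ∀ u, ∑ v : S, p u v = 1) :
    IsQMatrix (schloglQ S β₀ β₂ δ₁ δ₃ p) ∧
    ∀ lam : ℝ, 0 < lam → ∀ u : (S → ℕ) → ℝ,
      IsLamSolution (schloglQ S β₀ β₂ δ₁ δ₃ p) lam u → u = 0 :=
  schlogl_uniqueness_general S β₀ β₂ δ₁ δ₃ hβ₀ hβ₂ hδ₁ hδ₃ p hp0 hpd hp1
end
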